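/- arXiv:2405.19036 — 3 statements merged into one kernel-verified Lean document; each statement's English description precedes it below -/
import Mathlib

section
/- Let g(X) = β(X) ∗ (W_V X) be a convolution layer acting on sequences X ∈ ℝ^{D×(−∞:0]}, where W_V ∈ ℝ^{D×D} and β assigns to each input a filter β(X) ∈ ℝ^{D×(U+1)}. Assume B ≥ 1, c ≥ 1, r ≥ 1, ‖W_V‖_∞ ≤ B, and ‖β(X)‖_1 ≤ c whenever ‖X‖_∞ ≤ r. Then: (1) ‖g(X)‖_∞ ≤ B D r c for all X with ‖X‖_∞ ≤ r; (2) if furthermore ‖β(X) − β(X')‖_1 ≤ κ ‖X − X'‖_∞ for all ‖X‖_∞, ‖X'‖_∞ ≤ r, then ‖g(X) − g(X')‖_∞ ≤ B D (r κ + c) ‖X − X'‖_∞; (3) if g̃(X) = β̃(X) ∗ (W̃_V X) is another such layer with ‖W̃_V‖_∞ ≤ B and ‖β̃(X)‖_1 ≤ c for ‖X‖_∞ ≤ r, and if ‖W_V − W̃_V‖_∞ ≤ δ and ‖β(X) − β̃(X)‖_1 ≤ ι δ for all ‖X‖_∞ ≤ r, then ‖g(X) − g̃(X)‖_∞ ≤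 D r (B ι + c) δ for all ‖X‖_∞ ≤ r. -/
noncomputable section

/-- Evaluation of a convolution layer `g(X) = β(X) ∗ (W_V X)` with a (possibly
data-dependent) filter `β(X) ∈ ℝ^{D×(U+1)}`.  Sequences are indexed backwards:
index `s : ℕ` stands for position `−s`, so `(g X)_{k,−s} = Σ_{j=0}^U β(X)_{k,j} (W_V X)_{k,−s−j}`. -/
def convEval {D U : ℕ} (β : (ℕ → Fin D → ℝ) → Fin D → Fin (U + 1) → ℝ)
    (Wv : Matrix (Fin D) (Fin D) ℝ) (X : ℕ → Fin D → ℝ) : ℕ → Fin D → ℝ :=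
  fun s k => ∑ j : Fin (U + 1), β X k j * ∑ l, Wv k l * X (s + (j : ℕ)) l

/-- `‖X − X'‖_∞` for (backward-indexed) sequences. -/
def supDiff {D : ℕ} (X X' : ℕ → Fin D → ℝ) : ℝ := ⨆ s : ℕ, ⨆ k : Fin D, |X s k - X' s k|

private lemma sum_mul_bound {D : ℕ} (W x : Fin D → ℝ) (b m : ℝ)
    (hW : ∀ l, |W l| ≤ b) (hx : ∀ l, |x l| ≤ m) :
    |∑ l, W l * x l| ≤ D * (b * m) := by
  calc |∑ l, W l * x l| ≤ ∑ l, |W l * x l| := Finset.abs_sum_le_sum_abs _ _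
    _ ≤ ∑ _l : Fin D, b * m := Finset.sum_le_sum fun l _ => by
        rw [abs_mul]
        exact mul_le_mul (hW l) (hx l) (abs_nonneg _) ((abs_nonneg _).trans (hW l))
    _ = D * (b * m) := by simp [Finset.sum_const, Finset.card_univ, nsmul_eq_mul]

private lemma le_supDiff {D : ℕ} (hD : 0 < D) (X X' : ℕ → Fin D → ℝ) (M : ℝ)
    (hb : ∀ s k, |X s k - X' s k| ≤ M) (s : ℕ) (k : Fin D) :
    |X s k - X' s k| ≤ supDiff X X' := by
  haveI : Nonempty (Fin D) := Fin.pos_iff_nonempty.mp hD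
  have hinner : ∀ s, BddAbove (Set.range fun k : Fin D => |X s k - X' s k|) :=
    fun s => (Set.finite_range _).bddAbove
  have houter : BddAbove (Set.range fun s : ℕ => ⨆ k : Fin D, |X s k - X' s k|) := by
    refine ⟨M, ?_⟩
    rintro _ ⟨t, rfl⟩
    exact ciSup_le fun k => hb t k
  exact (le_ciSup (hinner s) k).trans (le_ciSup houter s)

private lemma supDiff_nonneg {D : ℕ} (hD : 0 < D) (X X' : ℕ → Fin D → ℝ) (M : ℝ)
    (hb : ∀ s k, |X s k - X' s k| ≤ M) : 0 ≤ supDiff X X' :=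
  (abs_nonneg _).trans (le_supDiff hD X X' M hb 0 ⟨0, hD⟩)

/-- Boundedness, Lipschitzness (in the input) and parameter-perturbation bounds for
convolution layers `g(X) = β(X) ∗ (W_V X)`. -/
theorem conv_layer_bounds {D U : ℕ} (B c r : ℝ) (hB : 1 ≤ B) (hc : 1 ≤ c) (hr : 1 ≤ r)
    (β : (ℕ → Fin D → ℝ) → Fin D → Fin (U + 1) → ℝ) (Wv : Matrix (Fin D) (Fin D) ℝ)
    (hWv : ∀ k l, |Wv k l| ≤ B)
    (hβ : ∀ X : ℕ → Fin D → ℝ, (∀ s k, |X s k| ≤ r) → ∀ k, ∑ j, |β X k j| ≤ c) :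
    -- (1) sup-norm bound on the output
    (∀ X : ℕ → Fin D → ℝ, (∀ s k, |X s k| ≤ r) →
      ∀ s k, |convEval β Wv X s k| ≤ B * D * r * c) ∧
    -- (2) Lipschitz continuity in the input
    (∀ κ : ℝ,
      (∀ X X' : ℕ → Fin D → ℝ, (∀ s k, |X s k| ≤ r) → (∀ s k, |X' s k| ≤ r) →
        ∀ k, ∑ j, |β X k j - β X' k j| ≤ κ * supDiff X X') →
      ∀ X X' : ℕ → Fin D → ℝ, (∀ s k, |X s k| ≤ r) → (∀ s k, |X' s k| ≤ r) →
        ∀ s k, |convEval β Wv X s k - convEval β Wv X' s k|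
          ≤ B * D * (r * κ + c) * supDiff X X') ∧
    -- (3) stability under perturbation of the parameters
    (∀ (βt : (ℕ → Fin D → ℝ) → Fin D → Fin (U + 1) → ℝ)
        (Wvt : Matrix (Fin D) (Fin D) ℝ) (ι δ : ℝ),
      (∀ k l, |Wvt k l| ≤ B) →
      (∀ X : ℕ → Fin D → ℝ, (∀ s k, |X s k| ≤ r) → ∀ k, ∑ j, |βt X k j| ≤ c) →
      (∀ k l, |Wv k l - Wvt k l| ≤ δ) →
      (∀ X : ℕ → Fin D → ℝ, (∀ s k, |X s k| ≤ r) →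
        ∀ k, ∑ j, |β X k j - βt X k j| ≤ ι * δ) →
      ∀ X : ℕ → Fin D → ℝ, (∀ s k, |X s k| ≤ r) →
        ∀ s k, |convEval β Wv X s k - convEval βt Wvt X s k| ≤ D * r * (B * ι + c) * δ) := by
  rcases Nat.eq_zero_or_pos D with hD | hD
  · subst hD
    exact ⟨fun X hX s k => k.elim0, fun κ h X X' hX hX' s k => k.elim0,
      fun βt Wvt ι δ h1 h2 h3 h4 X hX s k => k.elim0⟩
  have hB0 : (0 : ℝ) ≤ B := zero_le_one.trans hB
  have hr0 : (0 : ℝ) ≤ r := zero_le_one.trans hr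
  have hD0 : (0 : ℝ) ≤ (D : ℝ) := Nat.cast_nonneg D
  -- bound on |∑_l W k l * x l| for bounded W, x
  refine ⟨?_, ?_, ?_⟩
  · -- (1)
    intro X hX s k
    have hA : ∀ j : Fin (U + 1), |∑ l, Wv k l * X (s + (j : ℕ)) l| ≤ D * (B * r) :=
      fun j => sum_mul_bound _ _ _ _ (fun l => hWv k l) (fun l => hX _ l)
    calc |convEval β Wv X s k|
        ≤ ∑ j : Fin (U + 1), |β X k j * ∑ l, Wv k l * X (s + (j : ℕ)) l| :=
          Finset.abs_sum_le_sum_abs _ _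
      _ ≤ ∑ j : Fin (U + 1), |β X k j| * (D * (B * r)) := Finset.sum_le_sum fun j _ => by
          rw [abs_mul]
          exact mul_le_mul_of_nonneg_left (hA j) (abs_nonneg _)
      _ = (∑ j, |β X k j|) * (D * (B * r)) := (Finset.sum_mul _ _ _).symm
      _ ≤ c * (D * (B * r)) :=
          mul_le_mul_of_nonneg_right (hβ X hX k)
            (by positivity)
      _ = B * D * r * c := by ring
  · -- (2)
    intro κ hκ X X' hX hX' s k
    set S := supDiff X X' with hS
    have hbd : ∀ t l, |X t l - X' t l| ≤ r + r := fun t l =>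
      (abs_sub _ _).trans (add_le_add (hX t l) (hX' t l))
    have hSle : ∀ t l, |X t l - X' t l| ≤ S := le_supDiff hD X X' (r + r) hbd
    have hS0 : 0 ≤ S := supDiff_nonneg hD X X' (r + r) hbd
    have hA : ∀ j : Fin (U + 1), |∑ l, Wv k l * X (s + (j : ℕ)) l| ≤ D * (B * r) :=
      fun j => sum_mul_bound _ _ _ _ (fun l => hWv k l) (fun l => hX _ l)
    have hΔ : ∀ j : Fin (U + 1),
        |(∑ l, Wv k l * X (s + (j : ℕ)) l) - ∑ l, Wv k l * X' (s + (j : ℕ)) l|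
          ≤ D * (B * S) := by
      intro j
      have : (∑ l, Wv k l * X (s + (j : ℕ)) l) - ∑ l, Wv k l * X' (s + (j : ℕ)) l
          = ∑ l, Wv k l * (X (s + (j : ℕ)) l - X' (s + (j : ℕ)) l) := by
        rw [← Finset.sum_sub_distrib]
        exact Finset.sum_congr rfl fun l _ => by ring
      rw [this]
      exact sum_mul_bound _ _ _ _ (fun l => hWv k l) (fun l => hSle _ l)
    have key : convEval β Wv X s k - convEval β Wv X' s k
        = ∑ j : Fin (U + 1),
            ((β X k j - β X' k j) * (∑ l, Wv k l * X (s + (j : ℕ)) l)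
              + β X' k j * ((∑ l, Wv k l * X (s + (j : ℕ)) l)
                  - ∑ l, Wv k l * X' (s + (j : ℕ)) l)) := by
      unfold convEval
      rw [← Finset.sum_sub_distrib]
      exact Finset.sum_congr rfl fun j _ => by ring
    rw [key]
    calc _ ≤ ∑ j : Fin (U + 1),
          (|β X k j - β X' k j| * (D * (B * r)) + |β X' k j| * (D * (B * S))) := by
          refine (Finset.abs_sum_le_sum_abs _ _).trans (Finset.sum_le_sum fun j _ => ?_)
          refine (abs_add_le _ _).trans (add_le_add ?_ ?_)
          · rw [abs_mul]; exact mul_le_mul_of_nonneg_left (hA j) (abs_nonneg _)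
          · rw [abs_mul]; exact mul_le_mul_of_nonneg_left (hΔ j) (abs_nonneg _)
      _ = (∑ j, |β X k j - β X' k j|) * (D * (B * r))
            + (∑ j, |β X' k j|) * (D * (B * S)) := by
          rw [Finset.sum_add_distrib, Finset.sum_mul, Finset.sum_mul]
      _ ≤ (κ * S) * (D * (B * r)) + c * (D * (B * S)) := by
          refine add_le_add ?_ ?_
          · exact mul_le_mul_of_nonneg_right (hκ X X' hX hX' k) (by positivity)
          · exact mul_le_mul_of_nonneg_right (hβ X' hX' k) (by positivity)
      _ = B * D * (r * κ + c) * S := by ring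
  · -- (3)
    intro βt Wvt ι δ hWvt hβt hWd hβd X hX s k
    have hδ0 : 0 ≤ δ := (abs_nonneg _).trans (hWd ⟨0, hD⟩ ⟨0, hD⟩)
    have hA : ∀ j : Fin (U + 1), |∑ l, Wv k l * X (s + (j : ℕ)) l| ≤ D * (B * r) :=
      fun j => sum_mul_bound _ _ _ _ (fun l => hWv k l) (fun l => hX _ l)
    have hΔ : ∀ j : Fin (U + 1),
        |(∑ l, Wv k l * X (s + (j : ℕ)) l) - ∑ l, Wvt k l * X (s + (j : ℕ)) l|
          ≤ D * (δ * r) := by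
      intro j
      have : (∑ l, Wv k l * X (s + (j : ℕ)) l) - ∑ l, Wvt k l * X (s + (j : ℕ)) l
          = ∑ l, (Wv k l - Wvt k l) * X (s + (j : ℕ)) l := by
        rw [← Finset.sum_sub_distrib]
        exact Finset.sum_congr rfl fun l _ => by ring
      rw [this]
      exact sum_mul_bound _ _ _ _ (fun l => hWd k l) (fun l => hX _ l)
    have key : convEval β Wv X s k - convEval βt Wvt X s k
        = ∑ j : Fin (U + 1),
            ((β X k j - βt X k j) * (∑ l, Wv k l * X (s + (j : ℕ)) l)
              + βt X k j * ((∑ l, Wv k l * X (s + (j : ℕ)) l)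
                  - ∑ l, Wvt k l * X (s + (j : ℕ)) l)) := by
      unfold convEval
      rw [← Finset.sum_sub_distrib]
      exact Finset.sum_congr rfl fun j _ => by ring
    rw [key]
    calc _ ≤ ∑ j : Fin (U + 1),
          (|β X k j - βt X k j| * (D * (B * r)) + |βt X k j| * (D * (δ * r))) := by
          refine (Finset.abs_sum_le_sum_abs _ _).trans (Finset.sum_le_sum fun j _ => ?_)
          refine (abs_add_le _ _).trans (add_le_add ?_ ?_)
          · rw [abs_mul]; exact mul_le_mul_of_nonneg_left (hA j) (abs_nonneg _)
          · rw [abs_mul]; exact mul_le_mul_of_nonneg_left (hΔ j) (abs_nonneg _)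
      _ = (∑ j, |β X k j - βt X k j|) * (D * (B * r))
            + (∑ j, |βt X k j|) * (D * (δ * r)) := by
          rw [Finset.sum_add_distrib, Finset.sum_mul, Finset.sum_mul]
      _ ≤ (ι * δ) * (D * (B * r)) + c * (D * (δ * r)) := by
          refine add_le_add ?_ ?_
          · exact mul_le_mul_of_nonneg_right (hβd X hX k) (by positivity)
          · exact mul_le_mul_of_nonneg_right (hβt X hX k) (by positivity)
      _ = D * r * (B * ι + c) * δ := by ring
  
end
end

section
/- Fix θ ∈ ℝ^d and suppose there exist an index i* ∈ [d] and δ > 0 such that θ_{i*} > θ_i + δ for all i ≠ i*. Then for every x ∈ [0,1]^d, | Σ_{i=1}^d Softmax(θ)_i · x_i − x_{i*} | ≤ 2 d² exp(−δ). -/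
/-- The softmax function `Softmax(θ)_i = exp(θ_i) / Σ_j exp(θ_j)`. -/
noncomputable def softmax {d : ℕ} (θ : Fin d → ℝ) (i : Fin d) : ℝ :=
  Real.exp (θ i) / ∑ j, Real.exp (θ j)

/-- If `θ_{i*} > θ_i + δ` for all `i ≠ i*`, then for every `x ∈ [0,1]^d`,
`|Σ_i Softmax(θ)_i x_i − x_{i*}| ≤ 2 d² exp(−δ)`. -/
theorem softmax_selects_max {d : ℕ} (θ : Fin d → ℝ) (istar : Fin d) (δ : ℝ)
    (hδ : 0 < δ) (hsep : ∀ i : Fin d, i ≠ istar → θ i + δ < θ istar)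
    (x : Fin d → ℝ) (hx : ∀ i, x i ∈ Set.Icc (0 : ℝ) 1) :
    |(∑ i, softmax θ i * x i) - x istar| ≤ 2 * (d : ℝ) ^ 2 * Real.exp (-δ) := by
  have hS : (0:ℝ) < ∑ j, Real.exp (θ j) :=
    Finset.sum_pos (fun j _ => Real.exp_pos _) ⟨istar, Finset.mem_univ _⟩
  have hsum1 : ∑ i, softmax θ i = 1 := by
    simp only [softmax, ← Finset.sum_div]
    field_simp
  have key : (∑ i, softmax θ i * x i) - x istar
      = ∑ i, softmax θ i * (x i - x istar) := by
    simp only [mul_sub]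
    rw [Finset.sum_sub_distrib, ← Finset.sum_mul, hsum1, one_mul]
  have hsm_nonneg : ∀ i, 0 ≤ softmax θ i := fun i =>
    div_nonneg (Real.exp_pos _).le hS.le
  have hterm : ∀ i, |softmax θ i * (x i - x istar)| ≤
      if i = istar then 0 else Real.exp (-δ) := by
    intro i
    by_cases h : i = istar
    · simp [h]
    · simp only [h, if_false]
      rw [abs_mul, abs_of_nonneg (hsm_nonneg i)]
      have hx1 : |x i - x istar| ≤ 1 := by
        have h1 := hx i; have h2 := hx istar
        rw [Set.mem_Icc] at h1 h2
        rw [abs_le]; constructor <;> linarith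
      have hsm_le : softmax θ i ≤ Real.exp (-δ) := by
        have hle : Real.exp (θ istar) ≤ ∑ j, Real.exp (θ j) :=
          Finset.single_le_sum (fun j _ => (Real.exp_pos _).le) (Finset.mem_univ _)
        have : softmax θ i ≤ Real.exp (θ i) / Real.exp (θ istar) :=
          div_le_div_of_nonneg_left (Real.exp_pos _).le (Real.exp_pos _) hle
        refine this.trans ?_
        rw [← Real.exp_sub]
        exact Real.exp_le_exp.2 (by linarith [hsep i h])
      calc softmax θ i * |x i - x istar| ≤ softmax θ i * 1 :=
            mul_le_mul_of_nonneg_left hx1 (hsm_nonneg i)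
        _ = softmax θ i := mul_one _
        _ ≤ Real.exp (-δ) := hsm_le
  have hd1 : 1 ≤ d := istar.pos
  calc |(∑ i, softmax θ i * x i) - x istar|
      = |∑ i, softmax θ i * (x i - x istar)| := by rw [key]
    _ ≤ ∑ i, |softmax θ i * (x i - x istar)| := Finset.abs_sum_le_sum_abs _ _
    _ ≤ ∑ i : Fin d, (if i = istar then 0 else Real.exp (-δ)) :=
        Finset.sum_le_sum (fun i _ => hterm i)
    _ ≤ ∑ _i : Fin d, Real.exp (-δ) :=
        Finset.sum_le_sum (fun i _ => by split <;> simp [Real.exp_pos (-δ) |>.le])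
    _ = (d : ℝ) * Real.exp (-δ) := by simp [mul_comm]
    _ ≤ 2 * (d : ℝ) ^ 2 * Real.exp (-δ) := by
        have : (d:ℝ) ≤ 2 * (d:ℝ)^2 := by nlinarith [(Nat.one_le_cast (α := ℝ)).2 hd1]
        exact mul_le_mul_of_nonneg_right this (Real.exp_pos _).le
end

section
/- Let R ∈ ℝ^{k×d} be a matrix, x, y ∈ ℝ^d, and ε > 0. If |‖R(x−y)‖² − ‖x−y‖²| ≤ ε ‖x−y‖² and |‖R(x+y)‖² − ‖x+y‖²| ≤ ε ‖x+y‖², then |(Rx)ᵀ(Ry) − xᵀy| ≤ (ε/2)(‖x‖² + ‖y‖²). -/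
open Matrix

/-- If `R` approximately preserves the squared norms of `x − y` and `x + y`
(with relative error `ε`), then it approximately preserves the inner product:
`|(Rx)ᵀ(Ry) − xᵀy| ≤ (ε/2)(‖x‖² + ‖y‖²)`. -/
theorem inner_product_from_norm_preservation {k d : ℕ}
    (R : Matrix (Fin k) (Fin d) ℝ) (x y : Fin d → ℝ) (ε : ℝ) (hε : 0 < ε)
    (h₁ : |(R.mulVec (x - y)) ⬝ᵥ (R.mulVec (x - y)) - (x - y) ⬝ᵥ (x - y)|
        ≤ ε * ((x - y) ⬝ᵥ (x - y)))
    (h₂ : |(R.mulVec (x + y)) ⬝ᵥ (R.mulVec (x + y)) - (x + y) ⬝ᵥ (x + y)|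
        ≤ ε * ((x + y) ⬝ᵥ (x + y))) :
    |(R.mulVec x) ⬝ᵥ (R.mulVec y) - x ⬝ᵥ y| ≤ ε / 2 * (x ⬝ᵥ x + y ⬝ᵥ y) := by
  have hc : (R.mulVec y) ⬝ᵥ (R.mulVec x) = (R.mulVec x) ⬝ᵥ (R.mulVec y) :=
    dotProduct_comm _ _
  have hxy : y ⬝ᵥ x = x ⬝ᵥ y := dotProduct_comm _ _
  simp only [mulVec_add, mulVec_sub, dotProduct_add, add_dotProduct,
    sub_dotProduct, dotProduct_sub] at h₁ h₂
  rw [abs_le] at h₁ h₂ ⊢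
  constructor <;> nlinarith [h₁.1, h₁.2, h₂.1, h₂.2]
end
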